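/- (Tightness of McCormick envelopes) For boxes $[\ell_x, u_x] \times [\ell_y, u_y]$, the McCormick inequalities describe exactly the convex hull of the set $\{(x, y, xy) : \ell_x \le x \le u_x,\ \ell_y \le y \le u_y\}$. -/

import Mathlib

/-!
Each McCormick inequality is the nonnegativity of a product such as `(x - lx) * (y - ly)` at a
point of the graph `w = x * y`, so the graph lies in the McCormick polytope, which is convex.
Conversely, the slacks of the four McCormick inequalities at a point `p` of the polytope are
nonnegative, sum to `(ux - lx) * (uy - ly)`, and, used as weights on the four corners
`(x, y, x * y)` with `x ∈ {lx, ux}`, `y ∈ {ly, uy}`, have centre of mass `p`: the polytope is the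
tetrahedron spanned by these corners. On a degenerate box the inequalities force `w = x * y`.
-/

open Set Finset

def mccormick (lx ux ly uy : ℝ) : Set (ℝ × ℝ × ℝ) :=
  {p | lx ≤ p.1 ∧ p.1 ≤ ux ∧ ly ≤ p.2.1 ∧ p.2.1 ≤ uy ∧
    lx * p.2.1 + ly * p.1 - lx * ly ≤ p.2.2 ∧
    ux * p.2.1 + uy * p.1 - ux * uy ≤ p.2.2 ∧
    p.2.2 ≤ lx * p.2.1 + uy * p.1 - lx * uy ∧
    p.2.2 ≤ ux * p.2.1 + ly * p.1 - ux * ly}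

def bilinearGraph (lx ux ly uy : ℝ) : Set (ℝ × ℝ × ℝ) :=
  {p | lx ≤ p.1 ∧ p.1 ≤ ux ∧ ly ≤ p.2.1 ∧ p.2.1 ≤ uy ∧ p.2.2 = p.1 * p.2.1}

def mccormickCorner (lx ux ly uy : ℝ) : Fin 4 → ℝ × ℝ × ℝ :=
  ![(lx, ly, lx * ly), (lx, uy, lx * uy), (ux, ly, ux * ly), (ux, uy, ux * uy)]

/-- The slack of the McCormick inequality that is tight at every corner but the `i`-th one. -/
def mccormickSlack (lx ux ly uy : ℝ) (p : ℝ × ℝ × ℝ) : Fin 4 → ℝ :=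
  ![p.2.2 - (ux * p.2.1 + uy * p.1 - ux * uy),
    ux * p.2.1 + ly * p.1 - ux * ly - p.2.2,
    lx * p.2.1 + uy * p.1 - lx * uy - p.2.2,
    p.2.2 - (lx * p.2.1 + ly * p.1 - lx * ly)]

section

variable {lx ux ly uy : ℝ}

theorem bilinearGraph_subset_mccormick : bilinearGraph lx ux ly uy ⊆ mccormick lx ux ly uy := by
  rintro ⟨x, y, w⟩ ⟨hlx, hux, hly, huy, rfl : w = x * y⟩
  refine ⟨hlx, hux, hly, huy, ?_, ?_, ?_, ?_⟩
  · linarith [mul_nonneg (sub_nonneg.2 hlx) (sub_nonneg.2 hly)]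
  · linarith [mul_nonneg (sub_nonneg.2 hux) (sub_nonneg.2 huy)]
  · linarith [mul_nonneg (sub_nonneg.2 hlx) (sub_nonneg.2 huy)]
  · linarith [mul_nonneg (sub_nonneg.2 hux) (sub_nonneg.2 hly)]

theorem convex_mccormick : Convex ℝ (mccormick lx ux ly uy) := by
  rintro ⟨x, y, w⟩ ⟨p₁, p₂, p₃, p₄, p₅, p₆, p₇, p₈⟩ ⟨x', y', w'⟩ ⟨q₁, q₂, q₃, q₄, q₅, q₆, q₇, q₈⟩
    a b ha hb hab
  obtain rfl : b = 1 - a := by linarith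
  simp only [mccormick, Prod.smul_mk, Prod.mk_add_mk, smul_eq_mul]
  -- each constraint is affine, so its slack at the combination is `a * (slack at p) +
  -- (1 - a) * (slack at q)`: `nlinarith` needs only the products of `ha`, `hb` with `pᵢ`, `qᵢ`
  refine ⟨?_, ?_, ?_, ?_, ?_, ?_, ?_, ?_⟩ <;> nlinarith

theorem mccormickCorner_mem_bilinearGraph (hx : lx ≤ ux) (hy : ly ≤ uy) (i : Fin 4) :
    mccormickCorner lx ux ly uy i ∈ bilinearGraph lx ux ly uy := by
  fin_cases i <;> simp [mccormickCorner, bilinearGraph, hx, hy]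

theorem mccormickSlack_nonneg {p : ℝ × ℝ × ℝ} (hp : p ∈ mccormick lx ux ly uy) (i : Fin 4) :
    0 ≤ mccormickSlack lx ux ly uy p i := by
  obtain ⟨-, -, -, -, h₁, h₂, h₃, h₄⟩ := hp
  fin_cases i <;>
    simp only [mccormickSlack, Fin.zero_eta, Fin.mk_one, Fin.reduceFinMk, Matrix.cons_val,
      sub_nonneg] <;>
    linarith

theorem sum_mccormickSlack (p : ℝ × ℝ × ℝ) :
    ∑ i, mccormickSlack lx ux ly uy p i = (ux - lx) * (uy - ly) := by
  simp only [mccormickSlack, Fin.sum_univ_four, Matrix.cons_val]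
  ring

theorem sum_mccormickSlack_smul_mccormickCorner (p : ℝ × ℝ × ℝ) :
    ∑ i, mccormickSlack lx ux ly uy p i • mccormickCorner lx ux ly uy i =
      ((ux - lx) * (uy - ly)) • p := by
  obtain ⟨x, y, w⟩ := p
  simp only [mccormickSlack, mccormickCorner, Fin.sum_univ_four, Matrix.cons_val, Prod.smul_mk,
    Prod.mk_add_mk, smul_eq_mul, Prod.mk.injEq]
  refine ⟨?_, ?_, ?_⟩ <;> ring

theorem centerMass_mccormickSlack_mccormickCorner (hD : (ux - lx) * (uy - ly) ≠ 0)
    (p : ℝ × ℝ × ℝ) :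
    univ.centerMass (mccormickSlack lx ux ly uy p) (mccormickCorner lx ux ly uy) = p := by
  rw [Finset.centerMass, sum_mccormickSlack, sum_mccormickSlack_smul_mccormickCorner,
    inv_smul_smul₀ hD]

theorem mem_convexHull_bilinearGraph_of_mem_mccormick (hx : lx < ux) (hy : ly < uy)
    {p : ℝ × ℝ × ℝ} (hp : p ∈ mccormick lx ux ly uy) :
    p ∈ convexHull ℝ (bilinearGraph lx ux ly uy) := by
  have hD : 0 < (ux - lx) * (uy - ly) := mul_pos (sub_pos.2 hx) (sub_pos.2 hy)
  rw [← centerMass_mccormickSlack_mccormickCorner hD.ne' p]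
  exact univ.centerMass_mem_convexHull (fun i _ ↦ mccormickSlack_nonneg hp i)
    (by rwa [sum_mccormickSlack])
    (fun i _ ↦ mccormickCorner_mem_bilinearGraph hx.le hy.le i)

theorem mem_bilinearGraph_of_mem_mccormick_of_left_eq (hx : lx = ux) {p : ℝ × ℝ × ℝ}
    (hp : p ∈ mccormick lx ux ly uy) : p ∈ bilinearGraph lx ux ly uy := by
  obtain ⟨h₁, h₂, h₃, h₄, h₅, -, h₇, -⟩ := hp
  obtain rfl : p.1 = lx := le_antisymm (hx ▸ h₂) h₁
  exact ⟨h₁, h₂, h₃, h₄, by linarith⟩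

theorem mem_bilinearGraph_of_mem_mccormick_of_right_eq (hy : ly = uy) {p : ℝ × ℝ × ℝ}
    (hp : p ∈ mccormick lx ux ly uy) : p ∈ bilinearGraph lx ux ly uy := by
  obtain ⟨h₁, h₂, h₃, h₄, h₅, -, -, h₈⟩ := hp
  obtain rfl : p.2.1 = ly := le_antisymm (hy ▸ h₄) h₃
  exact ⟨h₁, h₂, h₃, h₄, by linarith⟩

theorem mccormick_subset_convexHull_bilinearGraph :
    mccormick lx ux ly uy ⊆ convexHull ℝ (bilinearGraph lx ux ly uy) := by
  intro p hp
  rcases (hp.1.trans hp.2.1).eq_or_lt with hx | hx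
  · exact subset_convexHull ℝ _ (mem_bilinearGraph_of_mem_mccormick_of_left_eq hx hp)
  rcases (hp.2.2.1.trans hp.2.2.2.1).eq_or_lt with hy | hy
  · exact subset_convexHull ℝ _ (mem_bilinearGraph_of_mem_mccormick_of_right_eq hy hp)
  exact mem_convexHull_bilinearGraph_of_mem_mccormick hx hy hp

end

theorem mccormick_convex_hull_general (lx ux ly uy : ℝ) :
    {p : ℝ × ℝ × ℝ | lx ≤ p.1 ∧ p.1 ≤ ux ∧ ly ≤ p.2.1 ∧ p.2.1 ≤ uy ∧
        lx * p.2.1 + ly * p.1 - lx * ly ≤ p.2.2 ∧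
        ux * p.2.1 + uy * p.1 - ux * uy ≤ p.2.2 ∧
        p.2.2 ≤ lx * p.2.1 + uy * p.1 - lx * uy ∧
        p.2.2 ≤ ux * p.2.1 + ly * p.1 - ux * ly}
      = convexHull ℝ {p : ℝ × ℝ × ℝ | lx ≤ p.1 ∧ p.1 ≤ ux ∧ ly ≤ p.2.1 ∧ p.2.1 ≤ uy ∧
          p.2.2 = p.1 * p.2.1} :=
  mccormick_subset_convexHull_bilinearGraph.antisymm
    (convexHull_min bilinearGraph_subset_mccormick convex_mccormick)

theorem mccormick_convex_hull (lx ux ly uy : ℝ) (hx : lx ≤ ux) (hy : ly ≤ uy) :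
    {p : ℝ × ℝ × ℝ | lx ≤ p.1 ∧ p.1 ≤ ux ∧ ly ≤ p.2.1 ∧ p.2.1 ≤ uy ∧
        lx * p.2.1 + ly * p.1 - lx * ly ≤ p.2.2 ∧
        ux * p.2.1 + uy * p.1 - ux * uy ≤ p.2.2 ∧
        p.2.2 ≤ lx * p.2.1 + uy * p.1 - lx * uy ∧
        p.2.2 ≤ ux * p.2.1 + ly * p.1 - ux * ly}
      = convexHull ℝ {p : ℝ × ℝ × ℝ | lx ≤ p.1 ∧ p.1 ≤ ux ∧ ly ≤ p.2.1 ∧ p.2.1 ≤ uy ∧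
          p.2.2 = p.1 * p.2.1} :=
  mccormick_convex_hull_general lx ux ly uy
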